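/- arXiv:2605.24671 — 8 statements merged into one kernel-verified Lean document; each statement's English description precedes it below -/
import Mathlib

section
/- Consider the Firework process on ℕ with one individual per site and i.i.d. spreading radii (R_n)_{n≥0} with common cumulative distribution function α_k = P(R_0 ≤ k). Then the probability that the final range of the rumor is infinite equals (1 + Σ_{j≥1} ∏_{k=0}^{j-1} α_k)^{-1}; in particular, this probability is 0 when the series Σ_{j≥1} ∏_{k=0}^{j-1} α_k diverges. -/
/-!
Call `n` a cut of the radii `r` if no site `k ≤ n` reaches beyond `n`. The rumor survives
(reaches every site) iff there is no cut. Otherwise either there are infinitely many cuts, which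
by Borel–Cantelli has probability zero when `S = ∑ₙ P(cut at n) = ∑ₙ ∏_{k ≤ n} α_k` is finite,
or there is a last cut `n`. Being the last cut means being a cut while the process restarted at
`n + 1` survives; the two events depend on disjoint sets of radii, and the restarted process has
the law of the original one, so `P(last cut at n) = P(cut at n) · P(survival)`. Summing over `n`
gives `P(survival) · (1 + S) = 1` when `S < ∞`, and `P(survival) · S ≤ 1` in general.
-/

open MeasureTheory ProbabilityTheory Filter

/-- The Firework process on `ℕ` driven by the radii `r : ℕ → ℕ`:
`A 0 = {0}` and `A (n+1) = {i | ∃ j ∈ A n, j ≤ i ≤ j + r j} \ A n`. -/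
def fireworkA (r : ℕ → ℕ) : ℕ → Set ℕ
  | 0 => {0}
  | n + 1 => {i | ∃ j ∈ fireworkA r n, j ≤ i ∧ i ≤ j + r j} \ fireworkA r n

lemma ENNReal.eq_inv_one_add_of_le_of_le {p S q : ENNReal} (hle : p + S * p ≤ 1)
    (hge : 1 ≤ p + S * p + q) (hq : S ≠ ⊤ → q = 0) : p = (1 + S)⁻¹ := by
  rcases eq_or_ne S ⊤ with rfl | hS
  · have hp : p = 0 := by
      by_contra hp
      rw [ENNReal.top_mul hp, add_top] at hle
      exact absurd hle (by simp)
    simp [hp]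
  · rw [hq hS, add_zero] at hge
    refine ENNReal.eq_inv_of_mul_eq_one_left ?_
    rw [mul_add, mul_one, mul_comm]
    exact le_antisymm hle hge

namespace Firework

def Survives (r : ℕ → ℕ) : Prop := ∀ t, ∃ j ≤ t, t < j + r j

def IsCut (r : ℕ → ℕ) (n : ℕ) : Prop := ∀ k ≤ n, k + r k ≤ n

def IsLastCut (r : ℕ → ℕ) (n : ℕ) : Prop := IsCut r n ∧ ∀ m, n < m → ¬IsCut r m

section Deterministic

variable {r : ℕ → ℕ}

lemma mem_iUnion_fireworkA_of_le_add {i j : ℕ} (hj : j ∈ ⋃ n, fireworkA r n) (hji : j ≤ i)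
    (hij : i ≤ j + r j) : i ∈ ⋃ n, fireworkA r n := by
  obtain ⟨n, hn⟩ := Set.mem_iUnion.1 hj
  by_cases hi : i ∈ fireworkA r n
  · exact Set.mem_iUnion.2 ⟨n, hi⟩
  · exact Set.mem_iUnion.2 ⟨n + 1, ⟨j, hn, hji, hij⟩, hi⟩

lemma exists_lt_le_add_of_mem_iUnion_fireworkA {i : ℕ} (hi : i ∈ ⋃ n, fireworkA r n)
    (hi0 : i ≠ 0) : ∃ j ∈ ⋃ n, fireworkA r n, j < i ∧ i ≤ j + r j := by
  obtain ⟨n, hn⟩ := Set.mem_iUnion.1 hi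
  cases n with
  | zero => exact absurd hn hi0
  | succ m =>
    obtain ⟨⟨j, hj, hji, hij⟩, hni⟩ := hn
    exact ⟨j, Set.mem_iUnion.2 ⟨m, hj⟩, lt_of_le_of_ne hji fun h => hni (h ▸ hj), hij⟩

lemma mem_iUnion_fireworkA_of_le {i k : ℕ} (hi : i ∈ ⋃ n, fireworkA r n) (hki : k ≤ i) :
    k ∈ ⋃ n, fireworkA r n := by
  induction i, hki using Nat.le_induction with
  | base => exact hi
  | succ i _ ih =>
    obtain ⟨j, hj, hji, hij⟩ := exists_lt_le_add_of_mem_iUnion_fireworkA hi i.succ_ne_zero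
    exact ih (mem_iUnion_fireworkA_of_le_add hj (by omega) (by omega))

lemma iUnion_fireworkA_infinite_iff : (⋃ n, fireworkA r n).Infinite ↔ Survives r := by
  constructor
  · intro hinf t
    obtain ⟨b, hb, htb⟩ := hinf.exists_gt t
    obtain ⟨j, -, hjt, htj⟩ := exists_lt_le_add_of_mem_iUnion_fireworkA
      (mem_iUnion_fireworkA_of_le hb htb) t.succ_ne_zero
    exact ⟨j, by omega, by omega⟩
  · intro hsurv
    suffices h : ∀ t, t ∈ ⋃ n, fireworkA r n from
      Set.infinite_of_forall_exists_gt fun t => ⟨t + 1, h (t + 1), t.lt_succ_self⟩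
    intro t
    induction t with
    | zero => exact Set.mem_iUnion.2 ⟨0, rfl⟩
    | succ t ih =>
      obtain ⟨j, hjt, htj⟩ := hsurv t
      exact mem_iUnion_fireworkA_of_le_add (mem_iUnion_fireworkA_of_le ih hjt) (by omega)
        (by omega)

lemma survives_iff_forall_not_isCut : Survives r ↔ ∀ n, ¬IsCut r n := by
  simp only [Survives, IsCut, not_forall, not_le, exists_prop]

lemma IsCut.isCut_add_iff {n : ℕ} (h : IsCut r n) (m : ℕ) :
    IsCut r (n + 1 + m) ↔ IsCut (fun i => r (n + 1 + i)) m := by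
  constructor
  · intro hcut i hi
    have := hcut (n + 1 + i) (by omega)
    change i + r (n + 1 + i) ≤ m
    omega
  · intro hcut k hk
    by_cases hkn : k ≤ n
    · have := h k hkn
      omega
    · obtain ⟨i, rfl⟩ : ∃ i, k = n + 1 + i := ⟨k - (n + 1), by omega⟩
      have : i + r (n + 1 + i) ≤ m := hcut i (by omega)
      omega

lemma isLastCut_iff {n : ℕ} :
    IsLastCut r n ↔ IsCut r n ∧ Survives (fun i => r (n + 1 + i)) := by
  refine and_congr_right fun h => ?_
  rw [survives_iff_forall_not_isCut]
  constructor
  · intro hlast m hm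
    exact hlast (n + 1 + m) (by omega) ((h.isCut_add_iff m).2 hm)
  · intro hsurv m hnm hm
    obtain ⟨k, rfl⟩ : ∃ k, m = n + 1 + k := ⟨m - (n + 1), by omega⟩
    exact hsurv k ((h.isCut_add_iff k).1 hm)

lemma IsLastCut.eq {n m : ℕ} (hn : IsLastCut r n) (hm : IsLastCut r m) : n = m := by
  by_contra hne
  rcases Nat.lt_or_gt_of_ne hne with h | h
  · exact hn.2 m h hm.1
  · exact hm.2 n h hn.1

lemma survives_or_exists_isLastCut_or_frequently_isCut :
    Survives r ∨ (∃ n, IsLastCut r n) ∨ ∃ᶠ n in atTop, IsCut r n := by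
  by_cases hsurv : Survives r
  · exact Or.inl hsurv
  by_cases hfreq : ∃ᶠ n in atTop, IsCut r n
  · exact Or.inr (Or.inr hfreq)
  rw [Nat.frequently_atTop_iff_infinite, Set.not_infinite] at hfreq
  rw [survives_iff_forall_not_isCut, not_forall_not] at hsurv
  obtain ⟨n, hn, hmax⟩ := Set.exists_max_image _ id hfreq hsurv
  exact Or.inr (Or.inl ⟨n, hn, fun m hnm hm => absurd (hmax m hm) (not_le.2 hnm)⟩)

end Deterministic

lemma measurableSet_survives : MeasurableSet {x : ℕ → ℕ | Survives x} := by
  simp only [Survives]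
  measurability

lemma measurableSet_isLastCut (n : ℕ) : MeasurableSet {x : ℕ → ℕ | IsLastCut x n} := by
  simp only [IsLastCut, IsCut]
  measurability

section Probability

variable {Ω : Type*} [MeasurableSpace Ω] {μ : Measure Ω} {R : ℕ → Ω → ℕ}

lemma map_shift_eq (hmeas : ∀ n, Measurable (R n)) (hindep : iIndepFun R μ)
    (hident : ∀ n, μ.map (R n) = μ.map (R 0)) (a : ℕ) :
    μ.map (fun ω i => R (a + i) ω) = μ.map (fun ω i => R i ω) := by
  rw [(hindep.precomp (add_right_injective a)).map_fun_eq_infinitePi_map fun i => hmeas _,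
    hindep.map_fun_eq_infinitePi_map hmeas]
  simp only [hident]

lemma measure_isCut (hmeas : ∀ n, Measurable (R n)) (hindep : iIndepFun R μ)
    (hident : ∀ n, μ.map (R n) = μ.map (R 0)) (n : ℕ) :
    μ {ω | IsCut (R · ω) n} = ∏ k ∈ Finset.range (n + 1), μ {ω | R 0 ω ≤ k} := by
  have hcut : {ω | IsCut (R · ω) n} = ⋂ k ∈ Finset.range (n + 1), R k ⁻¹' {v | k + v ≤ n} := by
    ext ω
    simp [IsCut]
  have hfactor : ∀ k ∈ Finset.range (n + 1),
      μ (R k ⁻¹' {v | k + v ≤ n}) = μ {ω | R 0 ω ≤ n - k} := by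
    intro k hk
    rw [← Measure.map_apply (hmeas k) .of_discrete, hident,
      Measure.map_apply (hmeas 0) .of_discrete]
    congr 1
    ext ω
    have := Finset.mem_range.1 hk
    simp only [Set.mem_preimage, Set.mem_ofPred_eq]
    omega
  rw [hcut, hindep.measure_inter_preimage_eq_mul _ fun _ _ => .of_discrete,
    Finset.prod_congr rfl hfactor]
  simpa using Finset.prod_range_reflect (fun k => μ {ω | R 0 ω ≤ k}) (n + 1)

lemma measure_survives_shift (hmeas : ∀ n, Measurable (R n)) (hindep : iIndepFun R μ)
    (hident : ∀ n, μ.map (R n) = μ.map (R 0)) (a : ℕ) :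
    μ {ω | Survives fun i => R (a + i) ω} = μ {ω | Survives (R · ω)} := by
  have hX : Measurable fun ω i => R (a + i) ω := measurable_pi_lambda _ fun i => hmeas _
  have hY : Measurable fun ω i => R i ω := measurable_pi_lambda _ hmeas
  rw [show {ω | Survives (R · ω)} = (fun ω i => R i ω) ⁻¹' {x | Survives x} from rfl,
    ← Measure.map_apply hY measurableSet_survives, ← map_shift_eq hmeas hindep hident a,
    Measure.map_apply hX measurableSet_survives]
  rfl

lemma measure_isLastCut (hmeas : ∀ n, Measurable (R n)) (hindep : iIndepFun R μ)
    (hident : ∀ n, μ.map (R n) = μ.map (R 0)) (n : ℕ) :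
    μ {ω | IsLastCut (R · ω) n} = μ {ω | IsCut (R · ω) n} * μ {ω | Survives (R · ω)} := by
  rw [show {ω | IsLastCut (R · ω) n}
      = {ω | IsCut (R · ω) n} ∩ {ω | Survives fun i => R (n + 1 + i) ω} from
    Set.ext fun _ => isLastCut_iff, ← measure_survives_shift hmeas hindep hident (n + 1)]
  let past := ⨆ k ∈ Set.Iic n, MeasurableSpace.comap (R k) inferInstance
  let future := ⨆ k ∈ Set.Ioi n, MeasurableSpace.comap (R k) inferInstance
  have hindep_past_future : Indep past future μ :=
    indep_iSup_of_disjoint (fun k => (hmeas k).comap_le) ((iIndepFun_iff_iIndep _ _ _).1 hindep)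
      (Set.Iic_disjoint_Ioi le_rfl)
  have hcut : MeasurableSet[past] {ω | IsCut (R · ω) n} := by
    have : {ω | IsCut (R · ω) n} = ⋂ k ∈ Set.Iic n, R k ⁻¹' {v | k + v ≤ n} := by
      ext ω
      simp [IsCut]
    rw [this]
    refine MeasurableSet.biInter (Set.to_countable _) fun k hk => ?_
    exact le_iSup₂ (f := fun k (_ : k ∈ Set.Iic n) => MeasurableSpace.comap (R k) inferInstance)
      k hk _ ⟨_, .of_discrete, rfl⟩
  have hshift : Measurable[future] (fun ω i => R (n + 1 + i) ω) :=
    measurable_pi_lambda _ fun i => (comap_measurable (R (n + 1 + i))).mono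
      (le_iSup₂ (f := fun k (_ : k ∈ Set.Ioi n) => MeasurableSpace.comap (R k) inferInstance)
        (n + 1 + i) (by simp only [Set.mem_Ioi]; omega)) le_rfl
  exact (Indep_iff _ _ _).1 hindep_past_future _ _ hcut (hshift measurableSet_survives)

variable [IsProbabilityMeasure μ]

lemma measure_survives_add_tsum_isLastCut_le_one (hmeas : ∀ n, Measurable (R n)) :
    μ {ω | Survives (R · ω)} + ∑' n, μ {ω | IsLastCut (R · ω) n} ≤ 1 := by
  have hY : Measurable fun ω i => R i ω := measurable_pi_lambda _ hmeas
  have hlast : ∀ n, MeasurableSet {ω | IsLastCut (R · ω) n} :=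
    fun n => hY (measurableSet_isLastCut n)
  have hdisj : Disjoint {ω | Survives (R · ω)} (⋃ n, {ω | IsLastCut (R · ω) n}) :=
    Set.disjoint_iUnion_right.2 fun n => Set.disjoint_left.2 fun _ hsurv hL =>
      survives_iff_forall_not_isCut.1 hsurv n hL.1
  have hpair : Pairwise (Function.onFun Disjoint fun n => {ω | IsLastCut (R · ω) n}) :=
    fun n m hnm => Set.disjoint_left.2 fun _ hn hm => hnm (hn.eq hm)
  rw [← measure_iUnion hpair hlast, ← measure_union hdisj (.iUnion hlast)]
  exact prob_le_one

lemma one_le_measure_survives_add_tsum_isLastCut_add_limsup :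
    1 ≤ μ {ω | Survives (R · ω)} + ∑' n, μ {ω | IsLastCut (R · ω) n}
      + μ (limsup (fun n => {ω | IsCut (R · ω) n}) atTop) := by
  have hcover : Set.univ ⊆ {ω | Survives (R · ω)} ∪ (⋃ n, {ω | IsLastCut (R · ω) n})
      ∪ limsup (fun n => {ω | IsCut (R · ω) n}) atTop := by
    intro ω _
    rw [Set.mem_union, Set.mem_union, Set.mem_iUnion, mem_limsup_iff_frequently_mem, or_assoc]
    exact survives_or_exists_isLastCut_or_frequently_isCut
  calc 1 = μ Set.univ := measure_univ.symm
    _ ≤ μ ({ω | Survives (R · ω)} ∪ (⋃ n, {ω | IsLastCut (R · ω) n}))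
          + μ (limsup (fun n => {ω | IsCut (R · ω) n}) atTop) :=
      (measure_mono hcover).trans (measure_union_le _ _)
    _ ≤ _ := by
      gcongr
      exact (measure_union_le _ _).trans (by gcongr; exact measure_iUnion_le _)

end Probability

end Firework

open Firework in
/-- The probability that the final range of the rumor in the Firework process is infinite
equals `(1 + ∑_{j ≥ 1} ∏_{k=0}^{j-1} α_k)⁻¹` (in `ℝ≥0∞`, so this probability is `0` when
the series diverges). -/
theorem stmt0 {Ω : Type*} [MeasurableSpace Ω] (μ : Measure Ω) [IsProbabilityMeasure μ]
    (R : ℕ → Ω → ℕ) (hmeas : ∀ n, Measurable (R n))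
    (hindep : iIndepFun R μ)
    (hident : ∀ n, Measure.map (R n) μ = Measure.map (R 0) μ) :
    μ {ω | (⋃ n, fireworkA (fun k => R k ω) n).Infinite} =
      (1 + ∑' j : ℕ, ∏ k ∈ Finset.range (j + 1), μ {ω | R 0 ω ≤ k})⁻¹ := by
  have hcut : ∑' j : ℕ, ∏ k ∈ Finset.range (j + 1), μ {ω | R 0 ω ≤ k}
      = ∑' n, μ {ω | IsCut (R · ω) n} :=
    tsum_congr fun n => (measure_isCut hmeas hindep hident n).symm
  have hlast : ∑' n, μ {ω | IsLastCut (R · ω) n}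
      = (∑' j : ℕ, ∏ k ∈ Finset.range (j + 1), μ {ω | R 0 ω ≤ k}) * μ {ω | Survives (R · ω)} := by
    rw [hcut, ← ENNReal.tsum_mul_right]
    exact tsum_congr (measure_isLastCut hmeas hindep hident)
  rw [show {ω | (⋃ n, fireworkA (fun k => R k ω) n).Infinite} = {ω | Survives (R · ω)} from
    Set.ext fun _ => iUnion_fireworkA_infinite_iff]
  exact ENNReal.eq_inv_one_add_of_le_of_le
    (hlast ▸ measure_survives_add_tsum_isLastCut_le_one hmeas)
    (hlast ▸ one_le_measure_survives_add_tsum_isLastCut_add_limsup)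
    fun hfin => measure_limsup_atTop_eq_zero (hcut ▸ hfin)
end

section
/- Let ν be a Borel probability measure on [0,1] with moments m_n := ∫₀¹ x^n dν(x), let λ > 0, and set a_j := ∏_{k=0}^{j−1} (1 + λ m_{k+1})^{-1} for j ≥ 1. If liminf_{n→∞} n λ m_{n+1} > 1, then the series Σ_{j≥1} a_j converges. (By the explicit survival-probability formula for the individual-random model, this is the analytic content of the survival criterion of Corollary 2.6(1): the process C_ind(λ,ν) survives with positive probability.) -/
/-!
This is a form of Raabe's test. Put `a j = ∏_{k ≤ j} (1 + r k)⁻¹` with `r k = λ m_{k+1}`, and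
pick `1 < p < c < liminf n r n`. Bernoulli's inequality `(n/(n+1))^p ≥ 1 - p/(n+1)` gives
`(n+1)^p ≤ n^p (1 + r (n+1))` for large `n`. So `n^p a n` is eventually nonincreasing, hence
`a n = O(n^{-p})`, and `∑ n^{-p}` converges.
-/

open MeasureTheory Filter Finset

theorem EReal.exists_lt_eventually_lt_of_lt_liminf {α : Type*} {f : Filter α} {u : α → ℝ}
    {a : EReal} (h : a < liminf (fun i => (u i : EReal)) f) :
    ∃ c : ℝ, a < c ∧ ∀ᶠ i in f, c < u i := by
  obtain ⟨c, hac, hc⟩ := EReal.lt_iff_exists_real_btwn.1 h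
  exact ⟨c, hac, (eventually_lt_of_lt_liminf hc).mono fun i hi => EReal.coe_lt_coe_iff.1 hi⟩

theorem summable_of_eventually_mul_rpow_succ_le {a : ℕ → ℝ} (ha : ∀ n, 0 ≤ a n) {p : ℝ}
    (hp : 1 < p) (h : ∀ᶠ n : ℕ in atTop, a (n + 1) * ((n : ℝ) + 1) ^ p ≤ a n * (n : ℝ) ^ p) :
    Summable a := by
  obtain ⟨N, hN⟩ := eventually_atTop.1 h
  have hbound : ∀ n ≥ N, a n * (n : ℝ) ^ p ≤ a N * (N : ℝ) ^ p := by
    intro n hn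
    induction n, hn using Nat.le_induction with
    | base => exact le_rfl
    | succ n hn ih => exact_mod_cast (hN n hn).trans ih
  refine .of_norm_bounded_eventually_nat
    ((Real.summable_nat_rpow_inv.2 hp).mul_left (a N * (N : ℝ) ^ p)) ?_
  filter_upwards [eventually_ge_atTop (max N 1)] with n hn
  have hn_pos : (0 : ℝ) < (n : ℝ) ^ p :=
    Real.rpow_pos_of_pos (by exact_mod_cast (le_of_max_le_right hn)) p
  rw [Real.norm_of_nonneg (ha n), ← div_eq_mul_inv, le_div_iff₀ hn_pos]
  exact hbound n (le_of_max_le_left hn)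

theorem add_one_rpow_le_rpow_mul_one_add {x p c r : ℝ} (hx : 0 ≤ x) (hp : 1 ≤ p) (hpc : p < c)
    (hx_large : p * c ≤ (c - p) * (x + 1)) (hr : c < (x + 1) * r) :
    (x + 1) ^ p ≤ x ^ p * (1 + r) := by
  have hx1 : 0 < x + 1 := by linarith
  have hr_pos : 0 < r := pos_of_mul_pos_right (by linarith) hx1.le
  have hbernoulli : 1 - p / (x + 1) ≤ (x / (x + 1)) ^ p := by
    have hs : -1 ≤ -(x + 1)⁻¹ := neg_le_neg (inv_le_one_of_one_le₀ (by linarith))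
    have h := one_add_mul_self_le_rpow_one_add hs hp
    rwa [show 1 + -(x + 1)⁻¹ = x / (x + 1) by field_simp; ring,
      show 1 + p * -(x + 1)⁻¹ = 1 - p / (x + 1) by ring] at h
  have hfactor : 1 ≤ (1 + r) * (1 - p / (x + 1)) := by
    rw [one_sub_div hx1.ne', mul_div_assoc', le_div_iff₀ hx1]
    nlinarith
  calc (x + 1) ^ p ≤ (x + 1) ^ p * ((1 + r) * (1 - p / (x + 1))) :=
        le_mul_of_one_le_right (by positivity) hfactor
    _ ≤ (x + 1) ^ p * ((1 + r) * (x / (x + 1)) ^ p) := by gcongr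
    _ = x ^ p * (1 + r) := by
        rw [Real.div_rpow hx hx1.le]
        field_simp

theorem summable_prod_range_inv_one_add {r : ℕ → ℝ} (hr : ∀ n, 0 ≤ r n) {c : ℝ} (hc : 1 < c)
    (h : ∀ᶠ n : ℕ in atTop, c < n * r n) :
    Summable fun j => ∏ k ∈ range (j + 1), (1 + r k)⁻¹ := by
  obtain ⟨p, hp, hpc⟩ := exists_between hc
  have hfactor_pos : ∀ k, 0 < 1 + r k := fun k => by linarith [hr k]
  have hprod_nonneg : ∀ j, 0 ≤ ∏ k ∈ range (j + 1), (1 + r k)⁻¹ := fun j =>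
    prod_nonneg fun k _ => inv_nonneg.2 (hfactor_pos k).le
  refine summable_of_eventually_mul_rpow_succ_le hprod_nonneg hp ?_
  have hlarge : ∀ᶠ n : ℕ in atTop, p * c ≤ (c - p) * ((n : ℝ) + 1) := by
    filter_upwards [(tendsto_natCast_atTop_atTop (R := ℝ)).eventually_ge_atTop
      (p * c / (c - p))] with n hn
    rw [div_le_iff₀ (by linarith)] at hn
    nlinarith
  have hshift : ∀ᶠ n : ℕ in atTop, c < ((n : ℝ) + 1) * r (n + 1) := by
    simpa using (tendsto_add_atTop_nat 1).eventually h
  filter_upwards [hlarge, hshift] with n hn_large hn_shift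
  rw [prod_range_succ]
  calc (∏ k ∈ range (n + 1), (1 + r k)⁻¹) * (1 + r (n + 1))⁻¹ * ((n : ℝ) + 1) ^ p
      ≤ (∏ k ∈ range (n + 1), (1 + r k)⁻¹) * (1 + r (n + 1))⁻¹ *
          ((n : ℝ) ^ p * (1 + r (n + 1))) :=
        mul_le_mul_of_nonneg_left
          (add_one_rpow_le_rpow_mul_one_add n.cast_nonneg hp.le hpc hn_large hn_shift)
          (mul_nonneg (hprod_nonneg n) (inv_nonneg.2 (hfactor_pos _).le))
    _ = (∏ k ∈ range (n + 1), (1 + r k)⁻¹) * (n : ℝ) ^ p := by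
        field_simp [(hfactor_pos (n + 1)).ne']

theorem stmt4_general (ν : Measure ℝ)
    (l : ℝ) (hl : 0 < l)
    (m : ℕ → ℝ) (hm : ∀ n, m n = ∫ x in Set.Icc (0 : ℝ) 1, x ^ n ∂ν)
    (hliminf : 1 < Filter.liminf
      (fun n : ℕ => (((n : ℝ) * l * m (n + 1) : ℝ) : EReal)) atTop) :
    Summable (fun j : ℕ => ∏ k ∈ Finset.range (j + 1), (1 + l * m (k + 1))⁻¹) := by
  obtain ⟨c, hc, hc_lt⟩ := EReal.exists_lt_eventually_lt_of_lt_liminf hliminf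
  have hm_nonneg : ∀ n, 0 ≤ m n := fun n =>
    (hm n).symm ▸ setIntegral_nonneg measurableSet_Icc fun x hx => pow_nonneg hx.1 n
  refine summable_prod_range_inv_one_add (fun k => mul_nonneg hl.le (hm_nonneg (k + 1)))
    (by exact_mod_cast hc) ?_
  filter_upwards [hc_lt] with n hn
  rwa [← mul_assoc]

/-- Survival criterion for the individual-random model `C_ind(λ,ν)`:
if `liminf_{n→∞} n λ m_{n+1} > 1` (computed in `EReal` so that an infinite liminf is
allowed), where `m_n` are the moments of `ν`, then the series
`∑_{j≥1} ∏_{k=0}^{j-1} (1 + λ m_{k+1})⁻¹` converges; by the explicit survival-probability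
formula this means the process survives with positive probability. -/
theorem stmt4 (ν : Measure ℝ) [IsProbabilityMeasure ν] (hsupp : ν (Set.Icc 0 1)ᶜ = 0)
    (l : ℝ) (hl : 0 < l)
    (m : ℕ → ℝ) (hm : ∀ n, m n = ∫ x in Set.Icc (0 : ℝ) 1, x ^ n ∂ν)
    (hliminf : 1 < Filter.liminf
      (fun n : ℕ => (((n : ℝ) * l * m (n + 1) : ℝ) : EReal)) atTop) :
    Summable (fun j : ℕ => ∏ k ∈ Finset.range (j + 1), (1 + l * m (k + 1))⁻¹) :=
  stmt4_general ν l hl m hm hliminf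
end

section
/- Let ν be a Borel probability measure on [0,1] with moments m_n := ∫₀¹ x^n dν(x), let λ > 0, and set a_j := ∏_{k=0}^{j−1} (1 + λ m_{k+1})^{-1} for j ≥ 1. If limsup_{n→∞} n λ m_{n+1} < 1, then the series Σ_{j≥1} a_j diverges. (By the explicit survival-probability formula for the individual-random model, this is the analytic content of the extinction criterion of Corollary 2.6(1): the process C_ind(λ,ν) dies out almost surely.) -/
/-!
Write `a_j = ∏_{k ≤ j} (1 + b_k)⁻¹` with `b_k = λ m_{k+1} ≥ 0`. The limsup hypothesis gives
`n b_n ≤ 1` eventually, so `a_{j+1} = a_j / (1 + b_{j+1}) ≥ a_j (j + 1) / (j + 2)`: the sequence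
`(j + 1) a_j` is eventually nondecreasing, hence `a_j ≥ C / (j + 1)` with `C > 0`, and the series
diverges by comparison with the harmonic series.
-/

open MeasureTheory Filter Finset

theorem not_summable_of_monotoneOn_succ_mul {a : ℕ → ℝ} {N : ℕ} (hN : 0 < a N)
    (hmono : MonotoneOn (fun j : ℕ => ((j : ℝ) + 1) * a j) (Set.Ici N)) : ¬ Summable a := by
  intro ha
  set C := ((N : ℝ) + 1) * a N
  have hC : 0 < C := by positivity
  have hbound : ∀ᶠ j : ℕ in atTop, ‖((j : ℝ) + 1)⁻¹‖ ≤ C⁻¹ * a j := by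
    filter_upwards [eventually_ge_atTop N] with j hj
    rw [Real.norm_of_nonneg (by positivity), ← div_eq_inv_mul, le_div_iff₀ hC, inv_mul_eq_div,
      div_le_iff₀ (by positivity), mul_comm]
    exact hmono (Set.mem_Ici.mpr le_rfl) hj hj
  have hharm : Summable (fun j : ℕ => ((j : ℝ) + 1)⁻¹) :=
    (ha.mul_left C⁻¹).of_norm_bounded_eventually_nat hbound
  refine Real.not_summable_natCast_inv ((summable_nat_add_iff 1).mp ?_)
  simpa using hharm

theorem monotoneOn_succ_mul_prod_inv {b : ℕ → ℝ} {N : ℕ} (hb : ∀ k, 0 < 1 + b k)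
    (hle : ∀ n ≥ N, (n : ℝ) * b n ≤ 1) :
    MonotoneOn (fun j : ℕ => ((j : ℝ) + 1) * ∏ k ∈ range (j + 1), (1 + b k)⁻¹) (Set.Ici N) := by
  refine monotoneOn_nat_Ici_of_le_succ fun j hj => ?_
  set a := ∏ k ∈ range (j + 1), (1 + b k)⁻¹
  have ha : 0 ≤ a := prod_nonneg fun k _ => (inv_pos.mpr (hb k)).le
  have hbj : ((j : ℝ) + 1) * b (j + 1) ≤ 1 := by exact_mod_cast hle (j + 1) (by omega)
  rw [prod_range_succ, Nat.cast_succ, ← mul_assoc, ← div_eq_mul_inv, le_div_iff₀ (hb _)]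
  nlinarith

theorem not_summable_prod_inv_one_add {b : ℕ → ℝ} (hb : ∀ k, 0 < 1 + b k)
    (hle : ∀ᶠ n : ℕ in atTop, (n : ℝ) * b n ≤ 1) :
    ¬ Summable (fun j : ℕ => ∏ k ∈ range (j + 1), (1 + b k)⁻¹) := by
  obtain ⟨N, hN⟩ := eventually_atTop.mp hle
  exact not_summable_of_monotoneOn_succ_mul (prod_pos fun k _ => inv_pos.mpr (hb k))
    (monotoneOn_succ_mul_prod_inv hb hN)

theorem stmt5_general (ν : Measure ℝ)
    (l : ℝ) (hl : 0 < l)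
    (m : ℕ → ℝ) (hm : ∀ n, m n = ∫ x in Set.Icc (0 : ℝ) 1, x ^ n ∂ν)
    (hlimsup : Filter.limsup
      (fun n : ℕ => (((n : ℝ) * l * m (n + 1) : ℝ) : EReal)) atTop < 1) :
    ¬ Summable (fun j : ℕ => ∏ k ∈ Finset.range (j + 1), (1 + l * m (k + 1))⁻¹) := by
  have hm_nonneg : ∀ n, 0 ≤ m n := fun n => by
    rw [hm]
    exact setIntegral_nonneg measurableSet_Icc fun x hx => pow_nonneg hx.1 n
  refine not_summable_prod_inv_one_add
    (fun k => add_pos_of_pos_of_nonneg one_pos (mul_nonneg hl.le (hm_nonneg _))) ?_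
  filter_upwards [eventually_lt_of_limsup_lt hlimsup] with n hn
  rw [← mul_assoc]
  exact_mod_cast hn.le

/-- Extinction criterion for the individual-random model `C_ind(λ,ν)`:
if `limsup_{n→∞} n λ m_{n+1} < 1` (computed in `EReal`), where `m_n` are the moments
of `ν`, then the series `∑_{j≥1} ∏_{k=0}^{j-1} (1 + λ m_{k+1})⁻¹` diverges; by the
explicit survival-probability formula this means the process dies out almost surely. -/
theorem stmt5 (ν : Measure ℝ) [IsProbabilityMeasure ν] (hsupp : ν (Set.Icc 0 1)ᶜ = 0)
    (l : ℝ) (hl : 0 < l)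
    (m : ℕ → ℝ) (hm : ∀ n, m n = ∫ x in Set.Icc (0 : ℝ) 1, x ^ n ∂ν)
    (hlimsup : Filter.limsup
      (fun n : ℕ => (((n : ℝ) * l * m (n + 1) : ℝ) : EReal)) atTop < 1) :
    ¬ Summable (fun j : ℕ => ∏ k ∈ Finset.range (j + 1), (1 + l * m (k + 1))⁻¹) :=
  stmt5_general ν l hl m hm hlimsup
end

section
/- Let λ > 0 and let ν be a Borel probability measure on [0,1] admitting a bounded density f with respect to Lebesgue measure such that the left limit f(1⁻) := lim_{x↑1} f(x) exists. Set m_n := ∫₀¹ x^n f(x) dx and a_j := ∏_{k=0}^{j−1} (1 + λ m_{k+1})^{-1}. If f(1⁻) > 1/λ, then Σ_{j≥1} a_j < ∞; if f(1⁻) < 1/λ, then Σ_{j≥1} a_j = ∞. (These are the analytic contents of the density criteria of Corollary 2.6(2) for survival and extinction of the individual-random model C_ind(λ,ν).) -/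
/-!
Writing `a_j / a_{j+1} = 1 + λ m_{j+2}`, the sequence `a` is governed by Raabe's test. The moments
satisfy `(n + 1) m_n → f(1⁻)`, because `(n + 1) xⁿ dx` concentrates its unit mass near `1`; hence
Raabe's quantity `(n + 1) (a_n / a_{n+1} - 1)` tends to `λ f(1⁻)`, and the test decides
summability according as this limit exceeds or falls short of `1`. Raabe's test itself follows by
comparing ratios with those of `(n + 1)^(-p)`, whose Raabe quantity tends to `p`, the derivative
of `t ↦ (1 + t)^p` at `0`.
-/

open MeasureTheory Filter Topology

noncomputable def raabeSeq (u : ℕ → ℝ) (n : ℕ) : ℝ := (n + 1) * (u n / u (n + 1) - 1)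

lemma summable_of_eventually_ratio_le {u v : ℕ → ℝ} (hu : ∀ n, 0 < u n) (hv : ∀ n, 0 < v n)
    (hsum : Summable v) (h : ∀ᶠ n in atTop, v n / v (n + 1) ≤ u n / u (n + 1)) :
    Summable u := by
  obtain ⟨N, hN⟩ := eventually_atTop.mp h
  have hanti : ∀ n ≥ N, u n / v n ≤ u N / v N := by
    intro n hn
    induction n, hn using Nat.le_induction with
    | base => exact le_rfl
    | succ n hn ih =>
      refine le_trans ?_ ih
      have := hN n hn
      rw [div_le_div_iff₀ (hv _) (hu _)] at this
      rw [div_le_div_iff₀ (hv _) (hv _)]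
      linarith [mul_comm (v n) (u (n + 1))]
  refine summable_of_isBigO_nat hsum (Asymptotics.IsBigO.of_bound (u N / v N) ?_)
  filter_upwards [eventually_ge_atTop N] with n hn
  rw [Real.norm_of_nonneg (hu n).le, Real.norm_of_nonneg (hv n).le, ← div_le_iff₀ (hv n)]
  exact hanti n hn

lemma eventually_ratio_le_of_raabeSeq {u v : ℕ → ℝ} {ℓ p : ℝ}
    (hu : Tendsto (raabeSeq u) atTop (𝓝 ℓ)) (hv : Tendsto (raabeSeq v) atTop (𝓝 p))
    (hpℓ : p < ℓ) : ∀ᶠ n in atTop, v n / v (n + 1) ≤ u n / u (n + 1) := by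
  filter_upwards [hv.eventually_lt hu hpℓ] with n hn
  have := lt_of_mul_lt_mul_left hn (by positivity)
  linarith

-- The right-hand side is the difference quotient of `t ↦ (1 + t) ^ p` at `0`, at `t = (n + 1)⁻¹`.
lemma raabeSeq_rpow_eq (p : ℝ) (n : ℕ) :
    raabeSeq (fun n : ℕ => ((n : ℝ) + 1) ^ (-p)) n
      = ((n : ℝ) + 1)⁻¹⁻¹ * ((1 + ((n : ℝ) + 1)⁻¹) ^ p - 1) := by
  have h1 : (0 : ℝ) < n + 1 := by positivity
  have h2 : (0 : ℝ) < n + 2 := by positivity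
  have hbase : 1 + ((n : ℝ) + 1)⁻¹ = (n + 2) / (n + 1) := by field_simp; ring
  simp only [raabeSeq, inv_inv, hbase]
  rw [Real.div_rpow h2.le h1.le, Real.rpow_neg h1.le, Real.rpow_neg (by positivity)]
  push_cast
  rw [show (n : ℝ) + 1 + 1 = n + 2 by ring, inv_div_inv]

lemma tendsto_raabeSeq_rpow (p : ℝ) :
    Tendsto (raabeSeq fun n : ℕ => ((n : ℝ) + 1) ^ (-p)) atTop (𝓝 p) := by
  have hderiv : HasDerivAt (fun t : ℝ => (1 + t) ^ p) p 0 := by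
    simpa using ((hasDerivAt_id (0 : ℝ)).const_add 1).rpow_const (p := p) (by simp)
  have hinv : Tendsto (fun n : ℕ => ((n : ℝ) + 1)⁻¹) atTop (𝓝[>] 0) :=
    tendsto_inv_atTop_nhdsGT_zero.comp (tendsto_natCast_atTop_atTop.atTop_add tendsto_const_nhds)
  have := hderiv.tendsto_slope_zero_right.comp hinv
  simp only [Function.comp_def, zero_add, add_zero, Real.one_rpow, smul_eq_mul] at this
  exact this.congr fun n => (raabeSeq_rpow_eq p n).symm

lemma summable_of_raabe {u : ℕ → ℝ} {ℓ : ℝ} (hu : ∀ n, 0 < u n)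
    (h : Tendsto (raabeSeq u) atTop (𝓝 ℓ)) (hℓ : 1 < ℓ) : Summable u := by
  obtain ⟨p, hp1, hpℓ⟩ := exists_between hℓ
  have hsum : Summable fun n : ℕ => ((n : ℝ) + 1) ^ (-p) := by
    simpa using (summable_nat_add_iff 1).mpr (Real.summable_nat_rpow.mpr (neg_lt_neg hp1))
  exact summable_of_eventually_ratio_le hu (fun n => by positivity) hsum
    (eventually_ratio_le_of_raabeSeq h (tendsto_raabeSeq_rpow p) hpℓ)

lemma not_summable_of_raabe {u : ℕ → ℝ} {ℓ : ℝ} (hu : ∀ n, 0 < u n)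
    (h : Tendsto (raabeSeq u) atTop (𝓝 ℓ)) (hℓ : ℓ < 1) : ¬ Summable u := by
  obtain ⟨p, hℓp, hp1⟩ := exists_between hℓ
  intro hsum
  have hv := summable_of_eventually_ratio_le (fun n => by positivity) hu hsum
    (eventually_ratio_le_of_raabeSeq (tendsto_raabeSeq_rpow p) h hℓp)
  have := Real.summable_nat_rpow.mp ((summable_nat_add_iff 1).mp (by simpa using hv))
  linarith

lemma abs_intervalIntegral_pow_mul_le {g : ℝ → ℝ} {a b : ℝ} (ha : 0 ≤ a) (hab : a ≤ b)
    (hg : IntervalIntegrable g volume 0 b) (n : ℕ) :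
    |∫ x in (0 : ℝ)..a, x ^ n * g x| ≤ a ^ n * ∫ x in (0 : ℝ)..b, |g x| := by
  have hgabs : IntervalIntegrable (fun x => |g x|) volume 0 a :=
    (hg.mono_set (Set.uIcc_subset_uIcc_left (Set.mem_uIcc_of_le ha hab))).abs
  calc |∫ x in (0 : ℝ)..a, x ^ n * g x|
      ≤ ∫ x in (0 : ℝ)..a, a ^ n * |g x| := by
        rw [← Real.norm_eq_abs]
        refine intervalIntegral.norm_integral_le_of_norm_le ha
          (ae_of_all _ fun x hx => ?_) (hgabs.const_mul _)
        rw [Real.norm_eq_abs, abs_mul, abs_pow, abs_of_pos hx.1]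
        gcongr
        exacts [hx.1.le, hx.2]
    _ = a ^ n * ∫ x in (0 : ℝ)..a, |g x| := intervalIntegral.integral_const_mul _ _
    _ ≤ a ^ n * ∫ x in (0 : ℝ)..b, |g x| := by
        gcongr
        exact intervalIntegral.integral_mono_interval le_rfl ha hab
          (ae_of_all _ fun x => abs_nonneg (g x)) hg.abs

lemma abs_intervalIntegral_pow_mul_le_of_abs_le {g : ℝ → ℝ} {a ε : ℝ} (ha : 0 ≤ a)
    (ha1 : a ≤ 1) (hε : 0 ≤ ε) (hg : ∀ x ∈ Set.Ioo a 1, |g x| ≤ ε) (n : ℕ) :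
    |∫ x in a..1, x ^ n * g x| ≤ ε / (n + 1) := by
  have hne : ∀ᵐ x : ℝ, x ∉ ({1} : Set ℝ) := measure_eq_zero_iff_ae_notMem.mp (measure_singleton 1)
  calc |∫ x in a..1, x ^ n * g x|
      ≤ ∫ x in a..1, ε * x ^ n := by
        rw [← Real.norm_eq_abs]
        refine intervalIntegral.norm_integral_le_of_norm_le ha1 ?_
          (((continuous_pow n).intervalIntegrable (μ := volume) _ _).const_mul ε)
        filter_upwards [hne] with x hx1 hx
        have hx0 : 0 ≤ x := ha.trans hx.1.le
        rw [Real.norm_eq_abs, abs_mul, abs_pow, abs_of_nonneg hx0, mul_comm]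
        gcongr
        exact hg x ⟨hx.1, lt_of_le_of_ne hx.2 hx1⟩
    _ = ε * ((1 - a ^ (n + 1)) / (n + 1)) := by
        rw [intervalIntegral.integral_const_mul, integral_pow, one_pow]
    _ ≤ ε / (n + 1) := by
        rw [mul_div_assoc', div_le_div_iff_of_pos_right (by positivity)]
        nlinarith [pow_nonneg ha (n + 1)]

lemma tendsto_mul_intervalIntegral_pow_mul_of_tendsto_zero {g : ℝ → ℝ}
    (hg : IntervalIntegrable g volume 0 1) (hlim : Tendsto g (𝓝[<] 1) (𝓝 0)) :
    Tendsto (fun n : ℕ => ((n : ℝ) + 1) * ∫ x in (0 : ℝ)..1, x ^ n * g x) atTop (𝓝 0) := by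
  rw [Metric.tendsto_nhds]
  intro ε hε
  obtain ⟨a, ha0, ha1, hga⟩ : ∃ a, 0 ≤ a ∧ a < 1 ∧ ∀ x ∈ Set.Ioo a 1, |g x| ≤ ε / 2 := by
    have hev : ∀ᶠ x in 𝓝[<] (1 : ℝ), |g x| ≤ ε / 2 := by
      simpa using hlim.eventually (Metric.closedBall_mem_nhds (0 : ℝ) (half_pos hε))
    obtain ⟨l, hl1, hl⟩ := mem_nhdsLT_iff_exists_Ioo_subset.mp hev
    refine ⟨max l 0, le_max_right _ _, max_lt hl1 one_pos, fun x hx => hl ?_⟩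
    exact ⟨(le_max_left _ _).trans_lt hx.1, hx.2⟩
  set C := ∫ x in (0 : ℝ)..1, |g x|
  have hdecay : Tendsto (fun n : ℕ => ((n : ℝ) + 1) * (a ^ n * C)) atTop (𝓝 0) := by
    have := ((tendsto_self_mul_const_pow_of_lt_one ha0 ha1).add
      (tendsto_pow_atTop_nhds_zero_of_lt_one ha0 ha1)).mul_const C
    simpa [add_mul, mul_assoc] using this
  filter_upwards [hdecay.eventually (gt_mem_nhds (half_pos hε))] with n hn
  have hI : IntervalIntegrable (fun x => x ^ n * g x) volume 0 1 :=
    hg.continuousOn_mul (continuous_pow n).continuousOn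
  have ha : a ∈ Set.uIcc (0 : ℝ) 1 := Set.mem_uIcc_of_le ha0 ha1.le
  rw [← intervalIntegral.integral_add_adjacent_intervals
    (hI.mono_set (Set.uIcc_subset_uIcc_left ha)) (hI.mono_set (Set.uIcc_subset_uIcc_right ha))]
  have hn1 : (0 : ℝ) < n + 1 := by positivity
  rw [Real.dist_eq, sub_zero, abs_mul, abs_of_pos hn1]
  calc ((n : ℝ) + 1) * |(∫ x in (0 : ℝ)..a, x ^ n * g x) + ∫ x in a..1, x ^ n * g x|
      ≤ ((n : ℝ) + 1) * (a ^ n * C + ε / 2 / (n + 1)) := by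
        gcongr
        exact (abs_add_le _ _).trans (add_le_add
          (abs_intervalIntegral_pow_mul_le ha0 ha1.le hg n)
          (abs_intervalIntegral_pow_mul_le_of_abs_le ha0 ha1.le (half_pos hε).le hga n))
    _ = ((n : ℝ) + 1) * (a ^ n * C) + ε / 2 := by field_simp
    _ < ε := by linarith

lemma tendsto_mul_intervalIntegral_pow_mul {f : ℝ → ℝ} {L : ℝ}
    (hf : IntervalIntegrable f volume 0 1) (hlim : Tendsto f (𝓝[<] 1) (𝓝 L)) :
    Tendsto (fun n : ℕ => ((n : ℝ) + 1) * ∫ x in (0 : ℝ)..1, x ^ n * f x) atTop (𝓝 L) := by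
  have h := tendsto_mul_intervalIntegral_pow_mul_of_tendsto_zero (g := fun x => f x - L)
    (hf.sub intervalIntegrable_const) (by simpa using hlim.sub_const L)
  have h' := h.add_const L
  rw [zero_add] at h'
  refine h'.congr fun n => ?_
  have hfn : IntervalIntegrable (fun x => x ^ n * f x) volume 0 1 :=
    hf.continuousOn_mul (continuous_pow n).continuousOn
  simp only [mul_sub]
  rw [intervalIntegral.integral_sub hfn ((continuous_pow n).intervalIntegrable _ _ |>.mul_const L),
    intervalIntegral.integral_mul_const, integral_pow]
  field_simp
  ring

lemma tendsto_natCast_add_one_mul_comp_add {x : ℕ → ℝ} {L : ℝ}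
    (h : Tendsto (fun n : ℕ => ((n : ℝ) + 1) * x n) atTop (𝓝 L)) (k : ℕ) :
    Tendsto (fun n : ℕ => ((n : ℝ) + 1) * x (n + k)) atTop (𝓝 L) := by
  have hx : Tendsto x atTop (𝓝 0) := by
    have hinv : Tendsto (fun n : ℕ => ((n : ℝ) + 1)⁻¹) atTop (𝓝 0) :=
      tendsto_inv_atTop_zero.comp (tendsto_natCast_atTop_atTop.atTop_add tendsto_const_nhds)
    simpa using (h.mul hinv).congr fun n => by field_simp
  have := ((tendsto_add_atTop_iff_nat k).mpr h).sub
    (((tendsto_add_atTop_iff_nat k).mpr hx).const_mul (k : ℝ))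
  simp only [mul_zero, sub_zero] at this
  exact this.congr fun n => by push_cast; ring

theorem stmt8_general (l : ℝ) (hl : 0 < l) (f : ℝ → ℝ) (hmeas : Measurable f)
    (hnonneg : ∀ x ∈ Set.Icc (0 : ℝ) 1, 0 ≤ f x)
    (M : ℝ) (hbdd : ∀ x ∈ Set.Icc (0 : ℝ) 1, f x ≤ M)
    (L : ℝ) (hlim : Tendsto f (nhdsWithin 1 (Set.Iio 1)) (nhds L))
    (m : ℕ → ℝ) (hm : ∀ n, m n = ∫ x in Set.Icc (0 : ℝ) 1, x ^ n * f x) :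
    (1 / l < L →
      Summable (fun j : ℕ => ∏ k ∈ Finset.range (j + 1), (1 + l * m (k + 1))⁻¹)) ∧
    (L < 1 / l →
      ¬ Summable (fun j : ℕ => ∏ k ∈ Finset.range (j + 1), (1 + l * m (k + 1))⁻¹)) := by
  set a := fun j : ℕ => ∏ k ∈ Finset.range (j + 1), (1 + l * m (k + 1))⁻¹
  have hm_nonneg : ∀ n, 0 ≤ m n := fun n => (hm n).symm ▸
    setIntegral_nonneg measurableSet_Icc fun x hx => mul_nonneg (pow_nonneg hx.1 n) (hnonneg x hx)
  have hfactor : ∀ k, 0 < 1 + l * m k := fun k =>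
    add_pos_of_pos_of_nonneg one_pos (mul_nonneg hl.le (hm_nonneg k))
  have ha_pos : ∀ j, 0 < a j := fun j => Finset.prod_pos fun k _ => inv_pos.mpr (hfactor _)
  have hf : IntervalIntegrable f volume 0 1 := by
    rw [intervalIntegrable_iff_integrableOn_Icc_of_le zero_le_one]
    refine Measure.integrableOn_of_bounded (M := M) (by simp) hmeas.aestronglyMeasurable ?_
    filter_upwards [ae_restrict_mem measurableSet_Icc] with x hx
    rw [Real.norm_of_nonneg (hnonneg x hx)]
    exact hbdd x hx
  have hmoment : Tendsto (fun n : ℕ => ((n : ℝ) + 1) * m n) atTop (𝓝 L) := by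
    simpa only [hm, integral_Icc_eq_integral_Ioc, ← intervalIntegral.integral_of_le zero_le_one]
      using tendsto_mul_intervalIntegral_pow_mul hf hlim
  have hraabe : Tendsto (raabeSeq a) atTop (𝓝 (l * L)) := by
    refine ((tendsto_natCast_add_one_mul_comp_add hmoment 2).const_mul l).congr fun n => ?_
    have hstep : a (n + 1) = a n * (1 + l * m (n + 2))⁻¹ := Finset.prod_range_succ _ (n + 1)
    rw [raabeSeq, hstep, div_mul_eq_div_div, div_self (ha_pos n).ne', one_div, inv_inv]
    ring
  refine ⟨fun hL => summable_of_raabe ha_pos hraabe ?_,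
    fun hL => not_summable_of_raabe ha_pos hraabe ?_⟩
  · rwa [div_lt_iff₀ hl, mul_comm] at hL
  · rwa [lt_div_iff₀ hl, mul_comm] at hL

/-- Density criteria for the individual-random model `C_ind(λ,ν)`: if `ν` is a Borel
probability measure on `[0,1]` with a bounded density `f` whose left limit `f(1⁻)` exists,
and `m_n = ∫₀¹ x^n f(x) dx`, `a_j = ∏_{k<j} (1 + λ m_{k+1})⁻¹`, then
`f(1⁻) > 1/λ` implies `∑_{j≥1} a_j < ∞` (survival) and `f(1⁻) < 1/λ` implies
`∑_{j≥1} a_j = ∞` (extinction). -/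
theorem stmt8 (l : ℝ) (hl : 0 < l) (f : ℝ → ℝ) (hmeas : Measurable f)
    (hnonneg : ∀ x ∈ Set.Icc (0 : ℝ) 1, 0 ≤ f x)
    (M : ℝ) (hbdd : ∀ x ∈ Set.Icc (0 : ℝ) 1, f x ≤ M)
    (ν : Measure ℝ) [IsProbabilityMeasure ν]
    (hdens : ν = (volume.restrict (Set.Icc (0 : ℝ) 1)).withDensity
      (fun x => ENNReal.ofReal (f x)))
    (L : ℝ) (hlim : Tendsto f (nhdsWithin 1 (Set.Iio 1)) (nhds L))
    (m : ℕ → ℝ) (hm : ∀ n, m n = ∫ x in Set.Icc (0 : ℝ) 1, x ^ n * f x) :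
    (1 / l < L →
      Summable (fun j : ℕ => ∏ k ∈ Finset.range (j + 1), (1 + l * m (k + 1))⁻¹)) ∧
    (L < 1 / l →
      ¬ Summable (fun j : ℕ => ∏ k ∈ Finset.range (j + 1), (1 + l * m (k + 1))⁻¹)) :=
  stmt8_general l hl f hmeas hnonneg M hbdd L hlim m hm
end

section
/- Let λ > 0 and let ν be a Borel probability measure on [0,1] admitting a bounded density f with respect to Lebesgue measure such that f(1⁻) := lim_{x↑1} f(x) = 1/λ and there exists C > 0 with |f(x) − f(1⁻)| ≤ C(1 − x) for all x ∈ [0,1]. Set m_n := ∫₀¹ x^n f(x) dx and a_j := ∏_{k=0}^{j−1} (1 + λ m_{k+1})^{-1}. Then Σ_{j≥1} a_j = ∞. (This is the analytic content of the critical case of Corollary 2.6(2): at the critical density value f(1⁻) = 1/λ, the individual-random model dies out almost surely.) -/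
/-!
The Lipschitz condition at `1` gives `f x ≤ 1/λ + C (1 - x)`, hence
`λ m_n ≤ (1 + λC)/(n+1) - λC/(n+2)`: the moments exceed `1/(λ(n+1))` by at most
`O(1/n²)`. So each factor satisfies `1 + λ m_{k+1} ≤ (k+3)/(k+2) · exp (λC (1/(k+2) - 1/(k+3)))`,
both parts telescope, `∏_{k ≤ j} (1 + λ m_{k+1}) ≤ (j+3)/2 · exp (λC/2)`, and the series dominates
a multiple of the harmonic series.
-/

open MeasureTheory Filter Set Real

lemma integral_Icc_zero_one_pow (n : ℕ) : ∫ x in Icc (0 : ℝ) 1, x ^ n = 1 / (n + 1) := by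
  rw [integral_Icc_eq_integral_Ioc, ← intervalIntegral.integral_of_le zero_le_one, integral_pow]
  simp

lemma setIntegral_Icc_pow_mul_le {f : ℝ → ℝ} {a b : ℝ} (hf : IntegrableOn f (Icc 0 1))
    (hle : ∀ x ∈ Icc (0 : ℝ) 1, f x ≤ a + b * (1 - x)) (n : ℕ) :
    ∫ x in Icc (0 : ℝ) 1, x ^ n * f x ≤ (a + b) / (n + 1) - b / (n + 2) := by
  have hpow (k : ℕ) : IntegrableOn (fun x : ℝ => x ^ k) (Icc 0 1) :=
    (continuous_pow k).continuousOn.integrableOn_Icc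
  have hdom := ((hpow n).const_mul (a + b)).sub ((hpow (n + 1)).const_mul b)
  calc ∫ x in Icc (0 : ℝ) 1, x ^ n * f x
      ≤ ∫ x in Icc (0 : ℝ) 1, ((a + b) * x ^ n - b * x ^ (n + 1)) := by
        refine setIntegral_mono_on (hf.continuousOn_mul (continuous_pow n).continuousOn
          isCompact_Icc) hdom measurableSet_Icc fun x hx => ?_
        calc x ^ n * f x ≤ x ^ n * (a + b * (1 - x)) :=
              mul_le_mul_of_nonneg_left (hle x hx) (pow_nonneg hx.1 n)
          _ = (a + b) * x ^ n - b * x ^ (n + 1) := by ring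
    _ = (a + b) / (n + 1) - b / (n + 2) := by
        rw [integral_sub ((hpow n).const_mul _) ((hpow (n + 1)).const_mul _), integral_const_mul,
          integral_const_mul, integral_Icc_zero_one_pow, integral_Icc_zero_one_pow]
        push_cast
        ring

lemma integrableOn_Icc_of_abs_sub_le {f : ℝ → ℝ} {c C : ℝ} (hf : Measurable f)
    (h : ∀ x ∈ Icc (0 : ℝ) 1, |f x - c| ≤ C * (1 - x)) : IntegrableOn f (Icc 0 1) := by
  refine Measure.integrableOn_of_bounded (M := |c| + |C|) (by simp) hf.aestronglyMeasurable ?_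
  filter_upwards [ae_restrict_mem measurableSet_Icc] with x hx
  calc ‖f x‖ ≤ |c| + |f x - c| := by
        simpa [Real.norm_eq_abs] using abs_add_le c (f x - c)
    _ ≤ |c| + |C| := by
        have : C * (1 - x) ≤ |C| * 1 :=
          mul_le_mul (le_abs_self C) (by linarith [hx.1]) (by linarith [hx.2]) (abs_nonneg C)
        linarith [h x hx]

lemma one_add_le_mul_exp {b u : ℝ} (k : ℕ) (hb : 0 ≤ b)
    (hu : u ≤ (1 + b) / (k + 2) - b / (k + 3)) :
    1 + u ≤ (k + 3) / (k + 2) * exp (b * (1 / (k + 2) - 1 / (k + 3))) := by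
  set d := b * (1 / ((k : ℝ) + 2) - 1 / (k + 3))
  have hd : 0 ≤ d := mul_nonneg hb (sub_nonneg.2 (by gcongr; linarith))
  calc 1 + u ≤ (k + 3) / (k + 2) * (1 + d) := by
        have : 0 ≤ d / (k + 2) := by positivity
        have : (1 + b) / (k + 2) - b / (k + 3) + 1 + d / (k + 2) = (k + 3) / (k + 2) * (1 + d) := by
          simp only [d]; field_simp; ring
        linarith
    _ ≤ (k + 3) / (k + 2) * exp d := by gcongr; linarith [add_one_le_exp d]

lemma prod_one_add_le {b : ℝ} {u : ℕ → ℝ} (hb : 0 ≤ b) (hu0 : ∀ k, 0 ≤ u k)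
    (hu : ∀ k : ℕ, u k ≤ (1 + b) / (k + 2) - b / (k + 3)) (N : ℕ) :
    ∏ k ∈ Finset.range N, (1 + u k) ≤ (N + 2) / 2 * exp (b * (1 / 2 - 1 / (N + 2))) := by
  induction N with
  | zero => norm_num
  | succ N ih =>
    rw [Finset.prod_range_succ]
    calc _ ≤ (N + 2) / 2 * exp (b * (1 / 2 - 1 / (N + 2))) *
          ((N + 3) / (N + 2) * exp (b * (1 / (N + 2) - 1 / (N + 3)))) :=
          mul_le_mul ih (one_add_le_mul_exp N hb (hu N)) (by linarith [hu0 N]) (by positivity)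
      _ = _ := by
        rw [mul_mul_mul_comm, ← exp_add]
        push_cast
        congr 1
        · field_simp; ring
        · ring_nf

lemma div_le_prod_inv_one_add {b : ℝ} {u : ℕ → ℝ} (hb : 0 ≤ b) (hu0 : ∀ k, 0 ≤ u k)
    (hu : ∀ k : ℕ, u k ≤ (1 + b) / (k + 2) - b / (k + 3)) (j : ℕ) :
    2 / exp (b / 2) / (j + 3) ≤ ∏ k ∈ Finset.range (j + 1), (1 + u k)⁻¹ := by
  rw [Finset.prod_inv_distrib, div_div, ← inv_div]
  refine inv_anti₀ (Finset.prod_pos fun k _ => by linarith [hu0 k]) ?_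
  calc ∏ k ∈ Finset.range (j + 1), (1 + u k)
      ≤ ((j + 1 : ℕ) + 2) / 2 * exp (b * (1 / 2 - 1 / ((j + 1 : ℕ) + 2))) :=
        prod_one_add_le hb hu0 hu (j + 1)
    _ ≤ ((j + 1 : ℕ) + 2) / 2 * exp (b / 2) := by
        gcongr
        nlinarith [show (0 : ℝ) ≤ 1 / ((j + 1 : ℕ) + 2) by positivity]
    _ = exp (b / 2) * (j + 3) / 2 := by push_cast; ring

lemma not_summable_of_div_add_three_le {a : ℕ → ℝ} {c : ℝ} (hc : 0 < c)
    (ha : ∀ j : ℕ, c / (j + 3) ≤ a j) : ¬ Summable a := fun hsum => by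
  have : Summable fun j : ℕ => c * ((j + 3 : ℕ) : ℝ)⁻¹ :=
    hsum.of_nonneg_of_le (fun j => by positivity) fun j => by push_cast; exact ha j
  rw [summable_nat_add_iff 3 (f := fun n : ℕ => c * (n : ℝ)⁻¹), summable_mul_left_iff hc.ne']
    at this
  exact not_summable_natCast_inv this

theorem stmt10_general (l : ℝ) (hl : 0 < l) (f : ℝ → ℝ) (hmeas : Measurable f)
    (hnonneg : ∀ x ∈ Set.Icc (0 : ℝ) 1, 0 ≤ f x)
    (C : ℝ) (hLip : ∀ x ∈ Set.Icc (0 : ℝ) 1, |f x - 1 / l| ≤ C * (1 - x))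
    (m : ℕ → ℝ) (hm : ∀ n, m n = ∫ x in Set.Icc (0 : ℝ) 1, x ^ n * f x) :
    ¬ Summable (fun j : ℕ => ∏ k ∈ Finset.range (j + 1), (1 + l * m (k + 1))⁻¹) := by
  have hC : 0 ≤ C := by simpa using (abs_nonneg _).trans (hLip 0 (by simp))
  have hm0 (n : ℕ) : 0 ≤ m n := hm n ▸ setIntegral_nonneg measurableSet_Icc fun x hx =>
    mul_nonneg (pow_nonneg hx.1 n) (hnonneg x hx)
  have hm_le (k : ℕ) : l * m (k + 1) ≤ (1 + l * C) / (k + 2) - l * C / (k + 3) := by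
    have hle : ∀ x ∈ Icc (0 : ℝ) 1, f x ≤ 1 / l + C * (1 - x) := fun x hx => by
      linarith [(abs_le.1 (hLip x hx)).2]
    refine (mul_le_mul_of_nonneg_left (hm (k + 1) ▸ setIntegral_Icc_pow_mul_le
      (integrableOn_Icc_of_abs_sub_le hmeas hLip) hle (k + 1)) hl.le).trans_eq ?_
    push_cast
    field_simp
    ring
  exact not_summable_of_div_add_three_le (by positivity) (div_le_prod_inv_one_add
    (mul_nonneg hl.le hC) (fun k => mul_nonneg hl.le (hm0 (k + 1))) hm_le)

/-- Critical case of the density criteria: if `ν` is a Borel probability measure on `[0,1]`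
with a bounded density `f` satisfying `f(1⁻) = 1/λ` and `|f(x) - f(1⁻)| ≤ C(1-x)`, then
with `m_n = ∫₀¹ x^n f(x) dx` the series `∑_{j≥1} ∏_{k<j} (1 + λ m_{k+1})⁻¹` diverges,
i.e. the individual-random model dies out almost surely at the critical value. -/
theorem stmt10 (l : ℝ) (hl : 0 < l) (f : ℝ → ℝ) (hmeas : Measurable f)
    (hnonneg : ∀ x ∈ Set.Icc (0 : ℝ) 1, 0 ≤ f x)
    (M : ℝ) (hbdd : ∀ x ∈ Set.Icc (0 : ℝ) 1, f x ≤ M)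
    (ν : Measure ℝ) [IsProbabilityMeasure ν]
    (hdens : ν = (volume.restrict (Set.Icc (0 : ℝ) 1)).withDensity
      (fun x => ENNReal.ofReal (f x)))
    (hlim : Tendsto f (nhdsWithin 1 (Set.Iio 1)) (nhds (1 / l)))
    (C : ℝ) (hC : 0 < C) (hLip : ∀ x ∈ Set.Icc (0 : ℝ) 1, |f x - 1 / l| ≤ C * (1 - x))
    (m : ℕ → ℝ) (hm : ∀ n, m n = ∫ x in Set.Icc (0 : ℝ) 1, x ^ n * f x) :
    ¬ Summable (fun j : ℕ => ∏ k ∈ Finset.range (j + 1), (1 + l * m (k + 1))⁻¹) :=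
  stmt10_general l hl f hmeas hnonneg C hLip m hm
end

section
/- Let a > 0 and λ > 0 satisfy aλ > 1. Then the series Σ_{j=1}^∞ ∏_{k=0}^{j−1} (a+k+1)/(a(1+λ)+k+1) converges to (a+1)/(aλ−1), and consequently (1+λ) / ( λ (1 + Σ_{j=1}^∞ ∏_{k=0}^{j−1} (a+k+1)/(a(1+λ)+k+1)) ) = 1 − 1/(aλ). -/
/-! With `c = a(1 + λ)`, the `j`-th summand is `u (j + 1)`, where `u n = (a + 1)_n / (c + 1)_n`
satisfies `(c + n + 1) u (n + 1) = (a + n + 1) u n`. Hence `(c - a - 1) u n = w n - w (n + 1)` for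
`w n = (c + n) u n`, and the series telescopes: `(c - a - 1) ∑_{n<N} u n = c - w N`. The sequence
`w` is positive and decreasing, so it has a limit `L ≥ 0`, and `L = 0` because otherwise
`u n ≥ L / (c + n)` would make the convergent series `∑ u n` dominate the harmonic series.
Thus `∑_{n≥0} u n = c / (c - a - 1)` (Gauss's sum for `₂F₁(a + 1, 1; c + 1; 1)`), and removing
`u 0 = 1` leaves `(a + 1) / (aλ - 1)`. -/

open Finset Filter Topology

noncomputable def pochhammerRatio (a c : ℝ) (n : ℕ) : ℝ :=
  ∏ k ∈ range n, (a + k + 1) / (c + k + 1)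

section

variable {a c : ℝ}

@[simp]
lemma pochhammerRatio_zero : pochhammerRatio a c 0 = 1 := prod_range_zero _

lemma pochhammerRatio_succ (n : ℕ) :
    pochhammerRatio a c (n + 1) = pochhammerRatio a c n * ((a + n + 1) / (c + n + 1)) :=
  prod_range_succ _ _

lemma pochhammerRatio_pos (ha : -1 < a) (hc : -1 < c) (n : ℕ) : 0 < pochhammerRatio a c n :=
  prod_pos fun k _ => by
    have hk : (0 : ℝ) ≤ k := k.cast_nonneg
    exact div_pos (by linarith) (by linarith)

lemma mul_pochhammerRatio_succ (hc : -1 < c) (n : ℕ) :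
    (c + n + 1) * pochhammerRatio a c (n + 1) = (a + n + 1) * pochhammerRatio a c n := by
  have hn : c + n + 1 ≠ 0 := by linarith [(n.cast_nonneg : (0 : ℝ) ≤ n)]
  rw [pochhammerRatio_succ]
  field_simp

lemma sub_mul_sum_range_pochhammerRatio (hc : -1 < c) (N : ℕ) :
    (c - a - 1) * ∑ n ∈ range N, pochhammerRatio a c n =
      c - (c + N) * pochhammerRatio a c N := by
  induction N with
  | zero => simp
  | succ N ih =>
    rw [sum_range_succ, mul_add, ih, Nat.cast_succ, ← add_assoc, mul_pochhammerRatio_succ hc]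
    ring

lemma antitone_add_mul_pochhammerRatio (ha : -1 < a) (hac : a + 1 ≤ c) :
    Antitone fun n : ℕ => (c + n) * pochhammerRatio a c n := by
  refine antitone_nat_of_succ_le fun n => ?_
  have hu := pochhammerRatio_pos ha (by linarith) n
  rw [Nat.cast_succ, ← add_assoc, mul_pochhammerRatio_succ (by linarith)]
  nlinarith

lemma summable_pochhammerRatio (ha : -1 < a) (hac : a + 1 < c) :
    Summable (pochhammerRatio a c) := by
  refine summable_of_sum_range_le (c := c / (c - a - 1))
    (fun n => (pochhammerRatio_pos ha (by linarith) n).le) fun N => ?_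
  have hu := pochhammerRatio_pos ha (by linarith) N
  have hN : (0 : ℝ) ≤ N := N.cast_nonneg
  rw [le_div_iff₀ (by linarith), mul_comm, sub_mul_sum_range_pochhammerRatio (by linarith)]
  nlinarith

lemma tendsto_add_mul_pochhammerRatio (ha : -1 < a) (hac : a + 1 < c) :
    Tendsto (fun n : ℕ => (c + n) * pochhammerRatio a c n) atTop (𝓝 0) := by
  set w := fun n : ℕ => (c + n) * pochhammerRatio a c n
  have hc : 0 < c := by linarith
  have hw_anti : Antitone w := antitone_add_mul_pochhammerRatio ha hac.le
  have hw_pos (n : ℕ) : 0 < w n :=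
    mul_pos (by positivity) (pochhammerRatio_pos ha (by linarith) n)
  obtain ⟨L, hL⟩ : ∃ L, Tendsto w atTop (𝓝 L) :=
    ⟨_, tendsto_atTop_ciInf hw_anti ⟨0, by rintro _ ⟨n, rfl⟩; exact (hw_pos n).le⟩⟩
  obtain rfl | hL_pos := (ge_of_tendsto' hL fun n => (hw_pos n).le).eq_or_lt
  · exact hL
  refine absurd ?_ ((Real.summable_one_div_nat_add_rpow c 1).not.mpr (lt_irrefl 1))
  refine ((summable_pochhammerRatio ha hac).mul_left L⁻¹).of_nonneg_of_le
    (fun n => by positivity) fun n => ?_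
  rw [Real.rpow_one, abs_of_pos (by positivity), div_le_iff₀ (by positivity)]
  calc (1 : ℝ) = L⁻¹ * L := (inv_mul_cancel₀ hL_pos.ne').symm
    _ ≤ L⁻¹ * w n := mul_le_mul_of_nonneg_left (hw_anti.le_of_tendsto hL n) (by positivity)
    _ = L⁻¹ * pochhammerRatio a c n * (n + c) := by ring

theorem hasSum_pochhammerRatio (ha : -1 < a) (hac : a + 1 < c) :
    HasSum (pochhammerRatio a c) (c / (c - a - 1)) := by
  rw [hasSum_iff_tendsto_nat_of_nonneg fun n => (pochhammerRatio_pos ha (by linarith) n).le]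
  have h := ((tendsto_add_mul_pochhammerRatio ha hac).const_sub c).div_const (c - a - 1)
  rw [sub_zero] at h
  refine h.congr fun N => ?_
  rw [← sub_mul_sum_range_pochhammerRatio (by linarith), mul_div_cancel_left₀ _ (by linarith)]

end

theorem stmt11_general (a l : ℝ) (ha : 0 < a) (hal : 1 < a * l) :
    HasSum (fun j : ℕ => ∏ k ∈ Finset.range (j + 1), (a + k + 1) / (a * (1 + l) + k + 1))
        ((a + 1) / (a * l - 1)) ∧
      (1 + l) / (l * (1 + ∑' j : ℕ,
          ∏ k ∈ Finset.range (j + 1), (a + k + 1) / (a * (1 + l) + k + 1))) =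
        1 - 1 / (a * l) := by
  have hl : 0 < l := pos_of_mul_pos_right (by linarith) ha.le
  have hal' : a * l - 1 ≠ 0 := by linarith
  have hsum : HasSum (fun j : ℕ => ∏ k ∈ range (j + 1), (a + k + 1) / (a * (1 + l) + k + 1))
      ((a + 1) / (a * l - 1)) := by
    have h := (hasSum_nat_add_iff' 1).mpr
      (hasSum_pochhammerRatio (a := a) (c := a * (1 + l)) (by linarith) (by linarith))
    rwa [sum_range_one, pochhammerRatio_zero, show a * (1 + l) - a - 1 = a * l - 1 by ring,
      show a * (1 + l) / (a * l - 1) - 1 = (a + 1) / (a * l - 1) by field_simp; ring] at h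
  refine ⟨hsum, ?_⟩
  rw [hsum.tsum_eq, show 1 + (a + 1) / (a * l - 1) = a * (1 + l) / (a * l - 1) by field_simp; ring]
  field_simp

/-- For `a > 0`, `λ > 0` with `aλ > 1`, the series
`∑_{j≥1} ∏_{k=0}^{j-1} (a+k+1)/(a(1+λ)+k+1)` converges to `(a+1)/(aλ-1)`, and
consequently the survival probability
`(1+λ)/(λ(1 + ∑_{j≥1} ∏_{k=0}^{j-1} (a+k+1)/(a(1+λ)+k+1)))` equals `1 - 1/(aλ)`. -/
theorem stmt11 (a l : ℝ) (ha : 0 < a) (hl : 0 < l) (hal : 1 < a * l) :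
    HasSum (fun j : ℕ => ∏ k ∈ Finset.range (j + 1), (a + k + 1) / (a * (1 + l) + k + 1))
        ((a + 1) / (a * l - 1)) ∧
      (1 + l) / (l * (1 + ∑' j : ℕ,
          ∏ k ∈ Finset.range (j + 1), (a + k + 1) / (a * (1 + l) + k + 1))) =
        1 - 1 / (a * l) :=
  stmt11_general a l ha hal
end

section
/- Let λ > 0. On a probability space, let N be an ℕ-valued random variable with P(N = n) = (1/(1+λ)) (λ/(1+λ))^n for n ≥ 0 (geometric with success parameter 1/(1+λ)), and let (R̄_i)_{i≥1} be i.i.d. ℕ-valued random variables with cumulative distribution ᾱ_k := P(R̄_1 ≤ k), independent of N. Define the effective radius R := max_{1≤i≤N} R̄_i, with R := 0 when N = 0. Then for every k ≥ 0, P(R ≤ k) = 1/(1 + λ(1 − ᾱ_k)). -/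
open MeasureTheory ProbabilityTheory
open scoped ENNReal

/-!
Conditioning on `N = n`, independence turns `P(R ≤ k)` into `∑ₙ P(N = n) ᾱ_k ^ n`, the
probability generating function of `N` at `ᾱ_k`; for the geometric law with success parameter
`p = 1/(1+λ)` this is the geometric series `p / (1 - (1 - p) ᾱ_k) = 1/(1 + λ(1 - ᾱ_k))`.
-/

section
variable {Ω β : Type*} [MeasurableSpace Ω] {μ : Measure Ω}

lemma measure_eq_tsum_inter_preimage_singleton [Countable β] {f : Ω → β} {s : Set Ω}
    (hs : ∀ b, MeasurableSet (s ∩ f ⁻¹' {b})) : μ s = ∑' b, μ (s ∩ f ⁻¹' {b}) := by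
  have hs_eq : s = ⋃ b, s ∩ f ⁻¹' {b} := by ext; simp
  conv_lhs => rw [hs_eq]
  exact measure_iUnion (fun b c hbc => (pairwise_disjoint_fiber f hbc).mono
    Set.inter_subset_right Set.inter_subset_right) hs

variable {N : Ω → ℕ} {Rb : ℕ → Ω → ℕ}

lemma measure_eq_and_forall_Icc_le_eq_mul_prod
    (hindep : iIndepFun (fun i => if i = 0 then N else Rb i) μ) (n k : ℕ) :
    μ {ω | N ω = n ∧ ∀ i ∈ Finset.Icc 1 n, Rb i ω ≤ k} =
      μ {ω | N ω = n} * ∏ i ∈ Finset.Icc 1 n, μ {ω | Rb i ω ≤ k} := by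
  have hpos : ∀ i ∈ Finset.Icc 1 n, i ≠ 0 := fun i hi => by simp at hi; omega
  have hprod := hindep.measure_inter_preimage_eq_mul (insert 0 (Finset.Icc 1 n))
    (sets := fun i => if i = 0 then {n} else Set.Iic k) (fun i _ => by split <;> simp)
  rw [Finset.set_biInter_insert, Finset.prod_insert fun h => hpos 0 h rfl,
    Finset.prod_congr rfl fun i hi => by rw [if_neg (hpos i hi), if_neg (hpos i hi)],
    Set.iInter₂_congr fun i hi => by rw [if_neg (hpos i hi), if_neg (hpos i hi)], if_pos rfl,
    if_pos rfl] at hprod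
  have hevent : {ω | N ω = n ∧ ∀ i ∈ Finset.Icc 1 n, Rb i ω ≤ k} =
      N ⁻¹' {n} ∩ ⋂ i ∈ Finset.Icc 1 n, Rb i ⁻¹' Set.Iic k := by
    ext ω
    simp
  rw [hevent]
  exact hprod

theorem measure_sup_Icc_le_eq_tsum (hN : Measurable N) (hR : ∀ i, Measurable (Rb i))
    (hindep : iIndepFun (fun i => if i = 0 then N else Rb i) μ) (k : ℕ) :
    μ {ω | (Finset.Icc 1 (N ω)).sup (fun i => Rb i ω) ≤ k} =
      ∑' n, μ {ω | N ω = n} * ∏ i ∈ Finset.Icc 1 n, μ {ω | Rb i ω ≤ k} := by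
  have hfiber : ∀ n, {ω | (Finset.Icc 1 (N ω)).sup (fun i => Rb i ω) ≤ k} ∩ N ⁻¹' {n} =
      {ω | N ω = n ∧ ∀ i ∈ Finset.Icc 1 n, Rb i ω ≤ k} := by
    intro n
    ext ω
    simp only [Set.mem_inter_iff, Set.mem_ofPred_eq, Set.mem_preimage, Set.mem_singleton_iff,
      Finset.sup_le_iff]
    constructor
    · rintro ⟨h, rfl⟩; exact ⟨rfl, h⟩
    · rintro ⟨rfl, h⟩; exact ⟨h, rfl⟩
  have hmeas : ∀ n, MeasurableSet {ω | N ω = n ∧ ∀ i ∈ Finset.Icc 1 n, Rb i ω ≤ k} := by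
    intro n
    measurability
  rw [measure_eq_tsum_inter_preimage_singleton fun n => hfiber n ▸ hmeas n]
  simp_rw [hfiber, measure_eq_and_forall_Icc_le_eq_mul_prod hindep]

end

lemma hasSum_geometric_pmf_mul_pow {l α : ℝ} (hl : 0 ≤ l) (hα0 : 0 ≤ α) (hα1 : α ≤ 1) :
    HasSum (fun n : ℕ => 1 / (1 + l) * (l / (1 + l)) ^ n * α ^ n) (1 + l * (1 - α))⁻¹ := by
  have hr0 : 0 ≤ l / (1 + l) * α := by positivity
  have hr1 : l / (1 + l) * α < 1 := by
    rw [div_mul_eq_mul_div, div_lt_one (by positivity)]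
    nlinarith
  have hlimit : 1 / (1 + l) * (1 - l / (1 + l) * α)⁻¹ = (1 + l * (1 - α))⁻¹ := by
    have h : 1 - l / (1 + l) * α = (1 + l * (1 - α)) / (1 + l) := by field_simp; ring
    rw [h, inv_div, one_div_mul_eq_div, div_div_cancel_left' (by positivity)]
  simp_rw [mul_assoc, ← mul_pow]
  rw [← hlimit]
  exact (hasSum_geometric_of_lt_one hr0 hr1).mul_left _

lemma tsum_ofReal_geometric_pmf_mul_pow {l : ℝ} (hl : 0 ≤ l) {a : ℝ≥0∞} (ha : a ≤ 1) :
    ∑' n : ℕ, ENNReal.ofReal (1 / (1 + l) * (l / (1 + l)) ^ n) * a ^ n =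
      (1 + ENNReal.ofReal l * (1 - a))⁻¹ := by
  obtain ⟨α, hα0, rfl⟩ : ∃ α : ℝ, 0 ≤ α ∧ ENNReal.ofReal α = a :=
    ⟨a.toReal, ENNReal.toReal_nonneg,
      ENNReal.ofReal_toReal (ne_top_of_le_ne_top ENNReal.one_ne_top ha)⟩
  have hα1 : α ≤ 1 := by simpa using ha
  have hsum := hasSum_geometric_pmf_mul_pow hl hα0 hα1
  have hpos : 0 < 1 + l * (1 - α) := by nlinarith
  have hterm : ∀ n : ℕ,
      ENNReal.ofReal (1 / (1 + l) * (l / (1 + l)) ^ n) * ENNReal.ofReal α ^ n =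
        ENNReal.ofReal (1 / (1 + l) * (l / (1 + l)) ^ n * α ^ n) := fun n => by
    rw [← ENNReal.ofReal_pow hα0, ← ENNReal.ofReal_mul (by positivity)]
  rw [tsum_congr hterm, ← ENNReal.ofReal_tsum_of_nonneg (fun n => by positivity) hsum.summable,
    hsum.tsum_eq, ENNReal.ofReal_inv_of_pos hpos, ENNReal.ofReal_add zero_le_one (by nlinarith),
    ENNReal.ofReal_one, ENNReal.ofReal_mul hl, ← ENNReal.ofReal_one,
    ← ENNReal.ofReal_sub _ hα0]

/-- Effective radius of a site in the Firework process with a geometric number of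
individuals: if `N ~ Geo(1/(1+λ))`, the radii `R̄_i` (`i ≥ 1`) are i.i.d. with cdf
`ᾱ_k = P(R̄_1 ≤ k)`, all independent, and `R = max_{1 ≤ i ≤ N} R̄_i` (with `R = 0` when
`N = 0`), then `P(R ≤ k) = 1/(1 + λ(1 - ᾱ_k))` for every `k`. -/
theorem stmt14 {Ω : Type*} [MeasurableSpace Ω] (μ : Measure Ω) [IsProbabilityMeasure μ]
    (l : ℝ) (hl : 0 < l) (N : Ω → ℕ) (Rb : ℕ → Ω → ℕ)
    (hmeasN : Measurable N) (hmeasR : ∀ i, Measurable (Rb i))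
    (hindep : iIndepFun
      (fun i : ℕ => if i = 0 then N else Rb i) μ)
    (hident : ∀ i, 1 ≤ i → Measure.map (Rb i) μ = Measure.map (Rb 1) μ)
    (hgeom : ∀ n : ℕ,
      μ {ω | N ω = n} = ENNReal.ofReal ((1 / (1 + l)) * (l / (1 + l)) ^ n)) :
    ∀ k : ℕ,
      μ {ω | (Finset.Icc 1 (N ω)).sup (fun i => Rb i ω) ≤ k} =
        (1 + ENNReal.ofReal l * (1 - μ {ω | Rb 1 ω ≤ k}))⁻¹ := by
  intro k
  have hcdf (n : ℕ) : ∀ i ∈ Finset.Icc 1 n, μ {ω | Rb i ω ≤ k} = μ {ω | Rb 1 ω ≤ k} :=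
    fun i hi => (IdentDistrib.mk (hmeasR i).aemeasurable (hmeasR 1).aemeasurable
      (hident i (Finset.mem_Icc.mp hi).1)).measure_mem_eq measurableSet_Iic
  rw [measure_sup_Icc_le_eq_tsum hmeasN hmeasR hindep k,
    ← tsum_ofReal_geometric_pmf_mul_pow hl.le prob_le_one]
  refine tsum_congr fun n => ?_
  rw [hgeom n, Finset.prod_congr rfl (hcdf n), Finset.prod_const, Nat.card_Icc, Nat.add_sub_cancel]
end

section
/- Let λ > 0, let ν be a Borel probability measure on [0,1], and let (τ_i)_{i≥0} be a sequence of nonnegative reals with τ_0 = 0 such that there exist constants K, C > 0 with τ_i ≤ K C^i for all i, and such that for all i ≥ 1 the backward Kolmogorov equations hold: λ(τ_{i+1} − τ_i) − τ_i + ∫₀¹ Σ_{j=0}^i binom(i,j) p^j (1−p)^{i−j} τ_j dν(p) = −1. Then F(z) := e^{−z} Σ_{i=0}^∞ τ_i z^i / i! defines a differentiable function on [0,∞) satisfying, for all z ≥ 0, λ F′(z) − F(z) + ∫₀¹ F(pz) dν(p) = e^{−z} − 1 + λ τ_1 e^{−z}. -/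
/-!
The exponential generating function `G(z) = ∑ τ_i z^i / i!` is entire because `τ` grows at
most geometrically, so `F = e^{-z} G` is differentiable with `F' = e^{-z} (G' - G)`, where
`G'` is the generating function of the shifted sequence. By the binomial theorem,
`e^{(1-p)z} G(pz)` is the generating function of the binomial means
`∑_j C(n,j) p^j (1-p)^{n-j} τ_j`, so after exchanging integral and series `∫ F(pz) dν(p)` is
`e^{-z}` times the generating function of their `ν`-averages. The backward equations express
these averages through `τ_n` and `τ_{n+1}`, which turns the series back into `e^z`, `G` and `G'`.
-/

open MeasureTheory Finset
open scoped Nat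

noncomputable def egf (a : ℕ → ℝ) (x : ℝ) : ℝ := ∑' i, a i * x ^ i / i !

def binomialMean (a : ℕ → ℝ) (n : ℕ) (p : ℝ) : ℝ :=
  ∑ j ∈ range (n + 1), (n.choose j : ℝ) * p ^ j * (1 - p) ^ (n - j) * a j

lemma summable_mul_pow_div_factorial (K y : ℝ) : Summable fun i : ℕ => K * y ^ i / i ! := by
  simpa only [mul_div_assoc] using (Real.summable_pow_div_factorial y).mul_left K

lemma hasDerivAt_mul_pow_succ_div_factorial (c : ℝ) (n : ℕ) (y : ℝ) :
    HasDerivAt (fun y : ℝ => c * y ^ (n + 1) / (n + 1)!) (c * y ^ n / n !) y := by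
  refine (((hasDerivAt_pow (n + 1) y).const_mul c).div_const ((n + 1)! : ℝ)).congr_deriv ?_
  rw [Nat.factorial_succ]
  push_cast
  field_simp

section GeometricBound

variable {a : ℕ → ℝ} {K M : ℝ}

lemma abs_comp_succ_le (ha : ∀ i, |a i| ≤ K * M ^ i) (i : ℕ) :
    |a (i + 1)| ≤ K * M * M ^ i := by
  rw [mul_assoc, ← pow_succ']
  exact ha (i + 1)

lemma norm_mul_pow_div_factorial_le (ha : ∀ i, |a i| ≤ K * M ^ i) {x R : ℝ} (hx : |x| ≤ R)
    (i : ℕ) : ‖a i * x ^ i / (i ! : ℝ)‖ ≤ K * (M * R) ^ i / i ! := by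
  rw [norm_div, norm_mul, norm_pow, Real.norm_eq_abs, Real.norm_eq_abs, Real.norm_natCast,
    mul_pow, ← mul_assoc]
  gcongr
  · exact (abs_nonneg _).trans (ha i)
  · exact ha i

lemma summable_norm_mul_pow_div_factorial (ha : ∀ i, |a i| ≤ K * M ^ i) (x : ℝ) :
    Summable fun i => ‖a i * x ^ i / (i ! : ℝ)‖ :=
  .of_nonneg_of_le (fun _ => norm_nonneg _) (norm_mul_pow_div_factorial_le ha le_rfl)
    (summable_mul_pow_div_factorial K (M * |x|))

lemma hasSum_egf (ha : ∀ i, |a i| ≤ K * M ^ i) (x : ℝ) :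
    HasSum (fun i => a i * x ^ i / i !) (egf a x) :=
  (summable_norm_mul_pow_div_factorial ha x).of_norm.hasSum

lemma hasDerivAt_egf (ha : ∀ i, |a i| ≤ K * M ^ i) (z : ℝ) :
    HasDerivAt (egf a) (egf (fun i => a (i + 1)) z) z := by
  have hsplit : egf a = fun y => a 0 + ∑' i, a (i + 1) * y ^ (i + 1) / (i + 1)! := by
    funext y
    rw [egf, (hasSum_egf ha y).summable.tsum_eq_zero_add]
    simp
  set R := |z| + 1
  rw [hsplit]
  refine HasDerivAt.const_add (a 0) ?_
  refine hasDerivAt_tsum_of_isPreconnected (t := Set.Ioo (-R) R) (y₀ := 0)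
    (summable_mul_pow_div_factorial (K * M) (M * R)) isOpen_Ioo isPreconnected_Ioo
    (fun n y _ => hasDerivAt_mul_pow_succ_div_factorial (a (n + 1)) n y)
    (fun n y hy => norm_mul_pow_div_factorial_le (abs_comp_succ_le ha) (abs_lt.2 hy).le n)
    (abs_lt.1 (by rw [abs_zero]; positivity))
    ((summable_nat_add_iff 1).2 (hasSum_egf ha 0).summable) (abs_lt.1 (lt_add_one _))

lemma exp_mul_egf (ha : ∀ i, |a i| ≤ K * M ^ i) (p z : ℝ) :
    Real.exp ((1 - p) * z) * egf a (p * z) = egf (fun n => binomialMean a n p) z := by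
  rw [mul_comm, Real.exp_eq_exp_ℝ,
    ← (NormedSpace.expSeries_div_hasSum_exp ((1 - p) * z)).tsum_eq, egf,
    tsum_mul_tsum_eq_tsum_sum_range_of_summable_norm
      (summable_norm_mul_pow_div_factorial ha _) (Real.summable_pow_div_factorial _).norm]
  refine tsum_congr fun n => ?_
  simp only [binomialMean, sum_mul, sum_div]
  refine sum_congr rfl fun j hj => ?_
  have hjn : j ≤ n := mem_range_succ_iff.1 hj
  rw [Nat.cast_choose ℝ hjn, mul_pow, mul_pow, ← pow_mul_pow_sub z hjn]
  field_simp

lemma abs_binomialMean_le (ha : ∀ i, |a i| ≤ K * M ^ i) (hM : 1 ≤ M) {p : ℝ}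
    (hp : p ∈ Set.Icc 0 1) (n : ℕ) : |binomialMean a n p| ≤ K * M ^ n := by
  obtain ⟨hp0, hp1⟩ := hp
  have hK : 0 ≤ K := by simpa using (abs_nonneg _).trans (ha 0)
  calc |binomialMean a n p|
      ≤ ∑ j ∈ range (n + 1),
          (n.choose j : ℝ) * p ^ j * (1 - p) ^ (n - j) * (K * M ^ j) := by
        refine (abs_sum_le_sum_abs _ _).trans (sum_le_sum fun j _ => ?_)
        have h1p : 0 ≤ 1 - p := by linarith
        rw [abs_mul, abs_of_nonneg (by positivity)]
        gcongr
        exact ha j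
    _ = K * (p * M + (1 - p)) ^ n := by
        rw [add_pow, mul_sum]
        exact sum_congr rfl fun j _ => by ring
    _ ≤ K * M ^ n := by
        gcongr
        nlinarith

end GeometricBound

lemma integral_egf {α : Type*} [MeasurableSpace α] {μ : Measure α} [IsFiniteMeasure μ]
    {b : ℕ → α → ℝ} {K M : ℝ} (hb_meas : ∀ n, AEStronglyMeasurable (b n) μ)
    (hb : ∀ n, ∀ᵐ x ∂μ, |b n x| ≤ K * M ^ n) (z : ℝ) :
    ∫ x, egf (fun n => b n x) z ∂μ = egf (fun n => ∫ x, b n x ∂μ) z := by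
  have hbound : ∀ n, ∀ᵐ x ∂μ, ‖b n x * z ^ n / (n ! : ℝ)‖ ≤ K * (M * |z|) ^ n / n ! :=
    fun n => (ae_all_iff.2 hb).mono fun x hx => norm_mul_pow_div_factorial_le hx le_rfl n
  have hint : ∀ n, Integrable (fun x => b n x * z ^ n / n !) μ := fun n =>
    .of_bound (by fun_prop) _ (hbound n)
  have hsum : Summable fun n => ∫ x, ‖b n x * z ^ n / (n ! : ℝ)‖ ∂μ := by
    refine .of_nonneg_of_le (fun n => integral_nonneg fun _ => norm_nonneg _) (fun n => ?_)
      ((summable_mul_pow_div_factorial K (M * |z|)).mul_right (μ.real Set.univ))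
    exact (Real.le_norm_self _).trans
      (norm_integral_le_of_norm_le_const ((hbound n).mono fun x hx => by rwa [norm_norm]))
  simp only [egf]
  rw [← integral_tsum_of_summable_integral_norm hint hsum]
  exact tsum_congr fun n => by rw [integral_div, integral_mul_const]

lemma continuous_binomialMean (a : ℕ → ℝ) (n : ℕ) : Continuous (binomialMean a n) := by
  unfold binomialMean
  fun_prop

lemma setIntegral_exp_neg_mul_egf {a : ℕ → ℝ} {K M : ℝ} {ν : Measure ℝ} [IsFiniteMeasure ν]
    (ha : ∀ i, |a i| ≤ K * M ^ i) (hM : 1 ≤ M) (z : ℝ) :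
    ∫ p in Set.Icc 0 1, Real.exp (-(p * z)) * egf a (p * z) ∂ν =
      Real.exp (-z) * egf (fun n => ∫ p in Set.Icc 0 1, binomialMean a n p ∂ν) z := by
  have hsplit : ∀ p, Real.exp (-(p * z)) * egf a (p * z) =
      Real.exp (-z) * egf (fun n => binomialMean a n p) z := fun p => by
    rw [← exp_mul_egf ha, ← mul_assoc, ← Real.exp_add]
    ring_nf
  simp_rw [hsplit]
  rw [integral_const_mul,
    integral_egf (fun n => (continuous_binomialMean a n).aestronglyMeasurable) fun n =>
      (ae_restrict_mem measurableSet_Icc).mono fun p hp => abs_binomialMean_le ha hM hp n]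

lemma egf_eq_of_backward_equation {τ I : ℕ → ℝ} {K M : ℝ} (hτ : ∀ i, |τ i| ≤ K * M ^ i)
    (h0 : τ 0 = 0) (hI0 : I 0 = 0) (l : ℝ)
    (hkol : ∀ i, 1 ≤ i → l * (τ (i + 1) - τ i) - τ i + I i = -1) (z : ℝ) :
    egf I z =
      1 + l * τ 1 - Real.exp z - l * (egf (fun i => τ (i + 1)) z - egf τ z) + egf τ z := by
  -- the backward equation at `i = 0` would give `I 0 = -1 - l * τ 1`; the indicator corrects it
  have hI : ∀ i,
      I i = (1 + l * τ 1) * (if i = 0 then 1 else 0) - 1 - l * (τ (i + 1) - τ i) + τ i := by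
    rintro (_ | i)
    · simp [hI0, h0]
    · rw [if_neg (Nat.succ_ne_zero i)]
      linarith [hkol (i + 1) (by omega)]
  have hδ : HasSum (fun i : ℕ => (if i = 0 then (1 : ℝ) else 0) * z ^ i / i !) 1 := by
    convert hasSum_single (f := fun i : ℕ => (if i = 0 then (1 : ℝ) else 0) * z ^ i / i !) 0
      fun i hi => by simp [hi] using 1
    simp
  have hexp : HasSum (fun i : ℕ => z ^ i / i !) (Real.exp z) := by
    simpa [Real.exp_eq_exp_ℝ] using NormedSpace.expSeries_div_hasSum_exp z
  have H := (((hδ.mul_left (1 + l * τ 1)).sub hexp).sub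
    (((hasSum_egf (abs_comp_succ_le hτ) z).sub (hasSum_egf hτ z)).mul_left l)).add
      (hasSum_egf hτ z)
  refine Eq.trans ?_ (H.tsum_eq.trans (by ring))
  exact tsum_congr fun i => by rw [hI i]; ring

theorem stmt17_general (l : ℝ) (ν : Measure ℝ) [IsProbabilityMeasure ν]
    (τ : ℕ → ℝ) (hpos : ∀ i, 0 ≤ τ i) (h0 : τ 0 = 0)
    (K C : ℝ) (hgrowth : ∀ i, τ i ≤ K * C ^ i)
    (hkol : ∀ i, 1 ≤ i →
      l * (τ (i + 1) - τ i) - τ i +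
          ∫ p in Set.Icc (0 : ℝ) 1,
            (∑ j ∈ Finset.range (i + 1),
              (i.choose j : ℝ) * p ^ j * (1 - p) ^ (i - j) * τ j) ∂ν =
        -1) :
    ∃ F' : ℝ → ℝ,
      (∀ z : ℝ, 0 ≤ z →
        HasDerivAt
          (fun z => Real.exp (-z) * ∑' i : ℕ, τ i * z ^ i / (Nat.factorial i))
          (F' z) z) ∧
      (∀ z : ℝ, 0 ≤ z →
        l * F' z - Real.exp (-z) * (∑' i : ℕ, τ i * z ^ i / (Nat.factorial i)) +
            ∫ p in Set.Icc (0 : ℝ) 1,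
              (Real.exp (-(p * z)) *
                ∑' i : ℕ, τ i * (p * z) ^ i / (Nat.factorial i)) ∂ν =
          Real.exp (-z) - 1 + l * τ 1 * Real.exp (-z)) := by
  have hτ : ∀ i, |τ i| ≤ |K| * max |C| 1 ^ i := fun i => calc
    |τ i| = τ i := abs_of_nonneg (hpos i)
    _ ≤ |K * C ^ i| := (hgrowth i).trans (le_abs_self _)
    _ ≤ |K| * max |C| 1 ^ i := by
      rw [abs_mul, abs_pow]
      gcongr
      exact le_max_left _ _
  refine ⟨fun z => Real.exp (-z) * (egf (fun i => τ (i + 1)) z - egf τ z), fun z _ => ?_,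
    fun z _ => ?_⟩
  · exact ((hasDerivAt_neg z).exp.mul (hasDerivAt_egf hτ z)).congr_deriv (by ring)
  · have hI0 : ∫ p in Set.Icc (0 : ℝ) 1, binomialMean τ 0 p ∂ν = 0 := by
      simp [binomialMean, h0]
    change l * _ - Real.exp (-z) * egf τ z +
      ∫ p in Set.Icc (0 : ℝ) 1, Real.exp (-(p * z)) * egf τ (p * z) ∂ν = _
    rw [setIntegral_exp_neg_mul_egf hτ (le_max_right _ _),
      egf_eq_of_backward_equation
        (I := fun n => ∫ p in Set.Icc (0 : ℝ) 1, binomialMean τ n p ∂ν) hτ h0 hI0 l hkol z]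
    have hexp : Real.exp (-z) * Real.exp z = 1 := by
      rw [← Real.exp_add, neg_add_cancel, Real.exp_zero]
    linear_combination -hexp

/-- If `(τ_i)` is nonnegative with `τ_0 = 0`, grows at most geometrically, and satisfies
the backward Kolmogorov equations of the catastrophe-random model, then its Poisson
transform `F(z) = e^{-z} ∑_i τ_i z^i/i!` is differentiable on `[0,∞)` and satisfies
`λ F'(z) - F(z) + ∫₀¹ F(pz) dν(p) = e^{-z} - 1 + λ τ_1 e^{-z}` there. -/
theorem stmt17 (l : ℝ) (hl : 0 < l) (ν : Measure ℝ) [IsProbabilityMeasure ν]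
    (hsupp : ν (Set.Icc 0 1)ᶜ = 0)
    (τ : ℕ → ℝ) (hpos : ∀ i, 0 ≤ τ i) (h0 : τ 0 = 0)
    (K C : ℝ) (hK : 0 < K) (hC : 0 < C) (hgrowth : ∀ i, τ i ≤ K * C ^ i)
    (hkol : ∀ i, 1 ≤ i →
      l * (τ (i + 1) - τ i) - τ i +
          ∫ p in Set.Icc (0 : ℝ) 1,
            (∑ j ∈ Finset.range (i + 1),
              (i.choose j : ℝ) * p ^ j * (1 - p) ^ (i - j) * τ j) ∂ν =
        -1) :
    ∃ F' : ℝ → ℝ,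
      (∀ z : ℝ, 0 ≤ z →
        HasDerivAt
          (fun z => Real.exp (-z) * ∑' i : ℕ, τ i * z ^ i / (Nat.factorial i))
          (F' z) z) ∧
      (∀ z : ℝ, 0 ≤ z →
        l * F' z - Real.exp (-z) * (∑' i : ℕ, τ i * z ^ i / (Nat.factorial i)) +
            ∫ p in Set.Icc (0 : ℝ) 1,
              (Real.exp (-(p * z)) *
                ∑' i : ℕ, τ i * (p * z) ^ i / (Nat.factorial i)) ∂ν =
          Real.exp (-z) - 1 + l * τ 1 * Real.exp (-z)) :=
  stmt17_general l ν τ hpos h0 K C hgrowth hkol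
end
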